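/- For every finite graph X and every p ∈ X, there exists a continuum Y that is not a finite graph and a point y ∈ Y such that C(p,X) is homeomorphic to C(y,Y). -/

import Mathlib

open Set Topology TopologicalSpace unitInterval

universe u

/-- `IndDimLE n X` : small inductive dimension of `X` is at most `n - 1`. -/
def IndDimLE : ℕ → ∀ (X : Type u) [TopologicalSpace X], Prop
  | 0, X, _ => IsEmpty X
  | (n+1), X, _ => ∀ (x : X) (U : Set X), IsOpen U → x ∈ U →
      ∃ V : Set X, IsOpen V ∧ x ∈ V ∧ V ⊆ U ∧ IndDimLE n ↥(frontier V)

/-- `X` is finite-dimensional (inductive dimension). -/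
def FinDim (X : Type u) [TopologicalSpace X] : Prop := ∃ n : ℕ, IndDimLE n X

/-- `ord(x,X) ≤ β`. -/
def OrdLE {X : Type u} [TopologicalSpace X] (x : X) (β : Cardinal.{u}) : Prop :=
  ∀ U : Set X, IsOpen U → x ∈ U →
    ∃ V : Set X, IsOpen V ∧ x ∈ V ∧ V ⊆ U ∧ Cardinal.mk ↥(frontier V) ≤ β

def FiniteOrd {X : Type u} [TopologicalSpace X] (x : X) : Prop :=
  ∃ n : ℕ, OrdLE x (n : Cardinal.{u})

def EndPt {X : Type u} [TopologicalSpace X] (x : X) : Prop := OrdLE x 1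

def RamPt {X : Type u} [TopologicalSpace X] (x : X) : Prop := ¬ OrdLE x 2

noncomputable def ordNat {X : Type u} [TopologicalSpace X] (x : X) : ℕ :=
  sInf {n : ℕ | OrdLE x (n : Cardinal.{u})}

/-- `A` is an arc with endpoints `x` and `y`. -/
def IsArcWith {X : Type u} [TopologicalSpace X] (A : Set X) (x y : X) : Prop :=
  ∃ h : unitInterval ≃ₜ ↥A, (h 0 : X) = x ∧ (h 1 : X) = y

/-- `G` is a finite graph: a continuum which is a finite union of arcs any two of which
are disjoint or meet only in endpoints. -/
def IsFiniteGraph {X : Type u} [TopologicalSpace X] (G : Set X) : Prop :=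
  IsConnected G ∧ ∃ (n : ℕ) (A : Fin n → Set X) (e : Fin n → X × X),
    (∀ i, IsArcWith (A i) (e i).1 (e i).2) ∧ (⋃ i, A i) = G ∧
    ∀ i j, i ≠ j → A i ∩ A j ⊆ ({(e i).1, (e i).2} ∩ {(e j).1, (e j).2} : Set X)

def NoSimpleClosedCurve (X : Type u) [TopologicalSpace X] : Prop :=
  ∀ S : Set X, ¬ Nonempty (↥S ≃ₜ Circle)

def IsContinuumSp (X : Type u) [MetricSpace X] : Prop :=
  Nonempty X ∧ CompactSpace X ∧ ConnectedSpace X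

def IsDendriteSp (X : Type u) [MetricSpace X] : Prop :=
  IsContinuumSp X ∧ LocallyConnectedSpace X ∧ NoSimpleClosedCurve X

def IsFiniteGraphSp (X : Type u) [MetricSpace X] : Prop :=
  IsContinuumSp X ∧ IsFiniteGraph (Set.univ : Set X)

def IsTreeSp (X : Type u) [MetricSpace X] : Prop :=
  IsFiniteGraphSp X ∧ NoSimpleClosedCurve X

/-- The hyperspace `C(p,X)` of subcontinua of `X` containing `p`, with the Hausdorff metric. -/
abbrev Cp (X : Type u) [MetricSpace X] (p : X) : Type u :=
  {A : NonemptyCompacts X // IsConnected (A : Set X) ∧ p ∈ (A : Set X)}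

/-- The hyperspace `C(X)` of subcontinua of `X`, with the Hausdorff metric. -/
abbrev ContHyp (X : Type u) [MetricSpace X] : Type u :=
  {A : NonemptyCompacts X // IsConnected (A : Set X)}

abbrev HilbertCube : Type := ℕ → unitInterval

def SemiHairy {X : Type u} [TopologicalSpace X] (p : X) : Prop :=
  (¬ FiniteOrd p) ∨ p ∈ closure ({q : X | RamPt q} \ {p})

def shRel {X : Type u} [TopologicalSpace X] (p : X) : Set X :=
  {q | SemiHairy q ∧ ∀ A : Set X, IsArcWith A p q → A ∩ {x : X | SemiHairy x} = {q}}

def IsFreeArcWith {X : Type u} [TopologicalSpace X] (A : Set X) (x y : X) : Prop :=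
  (EndPt x ∨ RamPt x) ∧ (EndPt y ∨ RamPt y) ∧
  ∃ h : unitInterval ≃ₜ ↥A, (h 0 : X) = x ∧ (h 1 : X) = y ∧
    ∀ t : unitInterval, (t : ℝ) ∈ Set.Ioo (0:ℝ) 1 → (h t : X) ∈ interior A

def IsFreeArc {X : Type u} [TopologicalSpace X] (A : Set X) : Prop :=
  ∃ x y, IsFreeArcWith A x y

def IsSubcontinuum {X : Type u} [TopologicalSpace X] (A : Set X) : Prop :=
  A.Nonempty ∧ IsCompact A ∧ IsConnected A

def DecomposableSet {X : Type u} [TopologicalSpace X] (C : Set X) : Prop :=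
  ∃ A B : Set X, IsSubcontinuum A ∧ IsSubcontinuum B ∧ A ⊆ C ∧ B ⊆ C ∧
    A ≠ C ∧ B ≠ C ∧ A ∪ B = C

def HereditarilyDecomposable (X : Type u) [TopologicalSpace X] : Prop :=
  ∀ C : Set X, IsSubcontinuum C → C.Nontrivial → DecomposableSet C

def HereditarilyIndecomposable (X : Type u) [TopologicalSpace X] : Prop :=
  ∀ C : Set X, IsSubcontinuum C → C.Nontrivial → ¬ DecomposableSet C

/-- `X` contains a free arc (arc whose non-endpoints are interior to the arc in `X`). -/
def HasFreeArcInt (X : Type u) [TopologicalSpace X] : Prop :=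
  ∃ (A : Set X) (h : unitInterval ≃ₜ ↥A),
    ∀ t : unitInterval, (t : ℝ) ∈ Set.Ioo (0:ℝ) 1 → (h t : X) ∈ interior A

/-!
Pick a point `c ≠ p` of `X` and blow it up into a segment: `Y` is the closure in `X × ℝ` of the
graph of `z ↦ 1 + sin (1 / d(z, c))` over `X \ {c}`, a topologist's sine curve centred at `c`.
Its projection to `X` is injective off the fibre `{c} × [0, 2]`, so its fibres are connected,
and a subcontinuum of `Y` containing the point above `p` is the full preimage of its projection:
if its projection contains `c`, then by the intermediate value theorem it contains points at
every small distance from `c`, above which the graph takes every value in `[0, 2]`. Hence taking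
images is a homeomorphism `C(y, Y) ≃ₜ C(p, X)`. But `Y` is not locally connected at `(c, 2)`,
while finite graphs are.
-/

section LocallyConnected

variable {Z : Type*} [TopologicalSpace Z]

theorem locallyConnectedSpace_of_iUnion_isClosed {ι : Type*} [Finite ι] {A : ι → Set Z}
    (hA : ∀ i, IsClosed (A i)) (hlc : ∀ i, LocallyConnectedSpace (A i))
    (hcover : ⋃ i, A i = univ) : LocallyConnectedSpace Z := by
  rw [locallyConnectedSpace_iff_connected_subsets]
  intro x U hU
  have hpiece : ∀ i : {i // x ∈ A i}, ∃ V : Set Z,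
      V ∈ 𝓝[A i] x ∧ IsPreconnected V ∧ x ∈ V ∧ V ⊆ U := by
    rintro ⟨i, hx⟩
    obtain ⟨W, hW, hWc, hWU⟩ := locallyConnectedSpace_iff_connected_subsets.1 (hlc i) ⟨x, hx⟩
      _ (continuous_subtype_val.continuousAt.preimage_mem_nhds hU)
    refine ⟨(↑) '' W, ?_, hWc.image _ continuous_subtype_val.continuousOn,
      ⟨_, mem_of_mem_nhds hW, rfl⟩, image_subset_iff.2 hWU⟩
    simpa only [map_nhds_subtype_val] using Filter.image_mem_map (m := Subtype.val) hW
  choose V hVx hVc hxV hVU using hpiece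
  refine ⟨⋃ i, V i, ?_, isPreconnected_iUnion ⟨x, mem_iInter.2 hxV⟩ hVc, iUnion_subset hVU⟩
  rw [← nhdsWithin_univ, ← hcover, nhdsWithin_iUnion, Filter.mem_iSup]
  intro i
  by_cases hx : x ∈ A i
  · exact Filter.mem_of_superset (hVx ⟨i, hx⟩) (subset_iUnion_of_subset ⟨i, hx⟩ subset_rfl)
  · rw [notMem_closure_iff_nhdsWithin_eq_bot.1 (by rwa [(hA i).closure_eq])]
    exact Filter.mem_bot

theorem IsArcWith.ne {A : Set Z} {x y : Z} (h : IsArcWith A x y) : x ≠ y := by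
  obtain ⟨φ, rfl, rfl⟩ := h
  exact fun h01 => zero_ne_one (φ.injective (Subtype.ext h01))

theorem IsArcWith.isCompact {A : Set Z} {x y : Z} (h : IsArcWith A x y) : IsCompact A := by
  obtain ⟨φ, -⟩ := h
  exact isCompact_iff_compactSpace.2 φ.compactSpace

theorem IsArcWith.locallyConnectedSpace {A : Set Z} {x y : Z} (h : IsArcWith A x y) :
    LocallyConnectedSpace A := by
  obtain ⟨φ, -⟩ := h
  have : LocallyConnectedSpace I :=
    (isQuotientMap_projIcc (h := zero_le_one)).isCoinducing.locallyConnectedSpace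
  exact φ.symm.locallyConnectedSpace

end LocallyConnected

section FiniteGraph

variable {Z : Type u} [MetricSpace Z]

theorem IsFiniteGraphSp.locallyConnectedSpace (h : IsFiniteGraphSp Z) :
    LocallyConnectedSpace Z := by
  obtain ⟨-, -, n, A, e, harc, hcover, -⟩ := h
  exact locallyConnectedSpace_of_iUnion_isClosed (fun i => (harc i).isCompact.isClosed)
    (fun i => (harc i).locallyConnectedSpace) hcover

theorem IsFiniteGraphSp.nontrivial (h : IsFiniteGraphSp Z) : Nontrivial Z := by
  obtain ⟨⟨⟨z⟩, -, -⟩, -, n, A, e, harc, hcover, -⟩ := h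
  obtain ⟨i, -⟩ := mem_iUnion.1 (hcover ▸ mem_univ z)
  exact ⟨⟨_, _, (harc i).ne⟩⟩

end FiniteGraph

namespace TopologicalSpace.NonemptyCompacts

variable {α : Type*} [TopologicalSpace α]

theorem isClosed_setOf_isPreconnected [T2Space α] :
    IsClosed {K : NonemptyCompacts α | IsPreconnected (K : Set α)} := by
  rw [← isOpen_compl_iff, isOpen_iff_forall_mem_open]
  intro K hK
  obtain ⟨u, v, hu, hv, hKuv, huv, hKu, hKv⟩ : ∃ u v : Set α, IsClosed u ∧ IsClosed v ∧
      (K : Set α) ⊆ u ∪ v ∧ Disjoint u v ∧ ¬ (K : Set α) ⊆ u ∧ ¬ (K : Set α) ⊆ v := by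
    simpa [isPreconnected_iff_subset_of_fully_disjoint_closed K.isCompact.isClosed] using hK
  obtain ⟨U, V, hU, hV, huU, hvV, hUV⟩ := SeparatedNhds.of_isCompact_isCompact
    (K.isCompact.inter_right hu) (K.isCompact.inter_right hv)
    (huv.mono inter_subset_right inter_subset_right)
  obtain ⟨a, haK, hav⟩ := not_subset.1 hKv
  obtain ⟨b, hbK, hbu⟩ := not_subset.1 hKu
  refine ⟨{L | (L : Set α) ⊆ U ∪ V} ∩ {L | ((L : Set α) ∩ U).Nonempty} ∩
      {L | ((L : Set α) ∩ V).Nonempty}, ?_, ?_, ?_⟩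
  · rintro L ⟨⟨hLUV, ⟨x, hxL, hxU⟩⟩, ⟨y, hyL, hyV⟩⟩ hL
    rcases hL.subset_or_subset hU hV hUV hLUV with hLU | hLV
    · exact hUV.notMem_of_mem_left (hLU hyL) hyV
    · exact hUV.notMem_of_mem_right (hLV hxL) hxU
  · exact ((isOpen_subsets_of_isOpen (hU.union hV)).inter
      (isOpen_inter_nonempty_of_isOpen hU)).inter (isOpen_inter_nonempty_of_isOpen hV)
  · refine ⟨⟨fun x hx => ?_, a, haK, huU ⟨haK, ?_⟩⟩, b, hbK, hvV ⟨hbK, ?_⟩⟩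
    · exact (hKuv hx).imp (fun h => huU ⟨hx, h⟩) (fun h => hvV ⟨hx, h⟩)
    · exact (hKuv haK).resolve_right hav
    · exact (hKuv hbK).resolve_left hbu

theorem isClosed_setOf_mem [T1Space α] (x : α) :
    IsClosed {K : NonemptyCompacts α | x ∈ (K : Set α)} := by
  simpa using isClosed_inter_nonempty_of_isClosed (isClosed_singleton (x := x))

end TopologicalSpace.NonemptyCompacts

instance {X : Type u} [MetricSpace X] [CompactSpace X] (p : X) : CompactSpace (Cp X p) := by
  have hCp : {K : NonemptyCompacts X | IsConnected (K : Set X) ∧ p ∈ (K : Set X)} =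
      {K : NonemptyCompacts X | IsPreconnected (K : Set X)} ∩ {K | p ∈ (K : Set X)} := by
    ext K
    simp [IsConnected, K.nonempty]
  have hclosed : IsClosed {K : NonemptyCompacts X | IsConnected (K : Set X) ∧ p ∈ (K : Set X)} :=
    hCp ▸ NonemptyCompacts.isClosed_setOf_isPreconnected.inter
      (NonemptyCompacts.isClosed_setOf_mem p)
  exact isCompact_iff_compactSpace.1 hclosed.isCompact

theorem IsClosed.isConnected_preimage_of_isConnected_fibers {X Y : Type*} [TopologicalSpace X]
    [TopologicalSpace Y] [CompactSpace Y] [T2Space X] {f : Y → X} (hf : Continuous f)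
    (hfib : ∀ x, IsConnected (f ⁻¹' {x})) {K : Set X} (hKc : IsClosed K) (hK : IsConnected K) :
    IsConnected (f ⁻¹' K) :=
  (IsQuotientMap.of_surjective_continuous (fun x => (hfib x).nonempty) hf).isCoinducing
    |>.isConnected_preimage_of_isClosed hfib hKc hK

noncomputable def cpHomeomorphOfSaturated {X Y : Type u} [MetricSpace X] [MetricSpace Y]
    [CompactSpace Y] {f : Y → X} (hf : Continuous f) (hfib : ∀ x, IsConnected (f ⁻¹' {x}))
    (y : Y) (hsat : ∀ S : Set Y, IsClosed S → IsPreconnected S → y ∈ S → f ⁻¹' (f '' S) = S) :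
    Cp Y y ≃ₜ Cp X (f y) :=
  have hsurj : Function.Surjective f := fun x => (hfib x).nonempty
  let e : Cp Y y ≃ Cp X (f y) :=
    { toFun S := ⟨S.1.map f hf, by
        rw [NonemptyCompacts.coe_map]
        exact ⟨S.2.1.image f hf.continuousOn, mem_image_of_mem f S.2.2⟩⟩
      invFun K := ⟨⟨⟨f ⁻¹' K.1, (K.1.isCompact.isClosed.preimage hf).isCompact⟩, y, K.2.2⟩,
        K.1.isCompact.isClosed.isConnected_preimage_of_isConnected_fibers hf hfib K.2.1, K.2.2⟩
      left_inv S := Subtype.ext <| NonemptyCompacts.ext <|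
        hsat S.1 S.1.isCompact.isClosed S.2.1.isPreconnected S.2.2
      right_inv K := Subtype.ext <| NonemptyCompacts.ext <| image_preimage_eq _ hsurj }
  (show Continuous e from (hf.nonemptyCompacts_map.comp continuous_subtype_val).subtype_mk _)
    |>.homeoOfEquivCompactToT2

theorem Real.exists_pos_lt_sin_inv_eq {s m : ℝ} (hs : s ∈ Icc (-1 : ℝ) 1) (hm : 0 < m) :
    ∃ t, 0 < t ∧ t < m ∧ Real.sin t⁻¹ = s := by
  obtain ⟨n, hn⟩ := exists_nat_gt ((m⁻¹ + |arcsin s|) / (2 * Real.pi))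
  rw [div_lt_iff₀ Real.two_pi_pos] at hn
  have hpos : 0 < arcsin s + n * (2 * Real.pi) := by
    linarith [neg_abs_le (arcsin s), inv_pos.2 hm]
  refine ⟨(arcsin s + n * (2 * Real.pi))⁻¹, inv_pos.2 hpos, ?_, ?_⟩
  · rw [inv_lt_comm₀ hpos hm]
    linarith [neg_abs_le (arcsin s)]
  · rw [inv_inv, sin_add_nat_mul_two_pi, sin_arcsin hs.1 hs.2]

section SinBlowup

variable {X : Type u} [MetricSpace X]

noncomputable def sinOsc (c z : X) : ℝ := 1 + Real.sin (dist z c)⁻¹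

def sinGraph (c : X) : Set (X × ℝ) := {w | w.1 ≠ c ∧ w.2 = sinOsc c w.1}

def sinBlowup (c : X) : Set (X × ℝ) := closure (sinGraph c)

def sinBlowupProj (c : X) (w : sinBlowup c) : X := (w : X × ℝ).1

theorem sinOsc_mem_Icc (c z : X) : sinOsc c z ∈ Icc (0 : ℝ) 2 := by
  rw [sinOsc]
  constructor <;> linarith [Real.neg_one_le_sin (dist z c)⁻¹, Real.sin_le_one (dist z c)⁻¹]

theorem continuousOn_sinOsc (c : X) : ContinuousOn (sinOsc c) {c}ᶜ := fun _ hz =>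
  ContinuousAt.continuousWithinAt <| continuousAt_const.add <| Real.continuous_sin.continuousAt.comp
    ((continuous_id.dist continuous_const).continuousAt.inv₀ (dist_ne_zero.2 hz))

theorem sinBlowup_subset_prod (c : X) : sinBlowup c ⊆ univ ×ˢ Icc (0 : ℝ) 2 :=
  closure_minimal (fun w hw => ⟨trivial, hw.2 ▸ sinOsc_mem_Icc c w.1⟩)
    (isClosed_univ.prod isClosed_Icc)

theorem sinBlowup_subset_fiber_union_graph (c : X) :
    sinBlowup c ⊆ {w | w.1 = c ∨ w.2 = sinOsc c w.1} := by
  refine closure_minimal (fun w hw => Or.inr hw.2) ?_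
  have hcompl : {w : X × ℝ | w.1 = c ∨ w.2 = sinOsc c w.1}ᶜ =
      Prod.fst ⁻¹' {c}ᶜ ∩ (fun w => (w.2, sinOsc c w.1)) ⁻¹' {q | q.1 ≠ q.2} := by
    ext w
    simp [not_or]
  rw [← isOpen_compl_iff, hcompl]
  exact (continuous_snd.continuousOn.prodMk ((continuousOn_sinOsc c).comp
    continuous_fst.continuousOn fun _ hw => hw)).isOpen_inter_preimage
    (isOpen_compl_singleton.preimage continuous_fst) (isOpen_ne_fun continuous_fst continuous_snd)

theorem snd_eq_sinOsc_of_mem {c : X} {w : X × ℝ} (hw : w ∈ sinBlowup c) (hc : w.1 ≠ c) :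
    w.2 = sinOsc c w.1 :=
  (sinBlowup_subset_fiber_union_graph c hw).resolve_left hc

theorem snd_mem_Icc_of_mem {c : X} {w : X × ℝ} (hw : w ∈ sinBlowup c) : w.2 ∈ Icc (0 : ℝ) 2 :=
  (sinBlowup_subset_prod c hw).2

theorem isCompact_sinBlowup [CompactSpace X] (c : X) : IsCompact (sinBlowup c) :=
  (isCompact_univ.prod isCompact_Icc).of_isClosed_subset isClosed_closure (sinBlowup_subset_prod c)

instance [CompactSpace X] (c : X) : CompactSpace (sinBlowup c) :=
  isCompact_iff_compactSpace.1 (isCompact_sinBlowup c)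

theorem mk_mem_closure_sinGraph_inter {c z : X} {K : Set X} (hK : IsPreconnected K)
    (hcK : c ∈ K) (hzK : z ∈ K) (hzc : z ≠ c) {s : ℝ} (hs : s ∈ Icc (0 : ℝ) 2) :
    (c, s) ∈ closure (sinGraph c ∩ Prod.fst ⁻¹' K) := by
  refine Metric.mem_closure_iff.2 fun ε hε => ?_
  obtain ⟨t, ht0, htm, hts⟩ := Real.exists_pos_lt_sin_inv_eq (s := s - 1)
    ⟨by linarith [hs.1], by linarith [hs.2]⟩ (lt_min hε (dist_pos.2 hzc))
  obtain ⟨z', hz'K, hz't⟩ := hK.intermediate_value hcK hzK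
    (continuous_id.dist continuous_const).continuousOn
    ⟨by simpa using ht0.le, htm.le.trans (min_le_right _ _)⟩
  have hz't : dist z' c = t := hz't
  have hz'c : z' ≠ c := by
    rintro rfl
    rw [dist_self] at hz't
    exact ht0.ne hz't
  refine ⟨(z', s), ⟨⟨hz'c, ?_⟩, hz'K⟩, ?_⟩
  · simp only [sinOsc, hz't, hts]
    ring
  · rw [Prod.dist_eq, dist_self, max_eq_left dist_nonneg, dist_comm, hz't]
    exact htm.trans_le (min_le_left _ _)

theorem mk_mem_sinBlowup [PreconnectedSpace X] [Nontrivial X] (c : X) {s : ℝ}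
    (hs : s ∈ Icc (0 : ℝ) 2) : (c, s) ∈ sinBlowup c :=
  have ⟨_, hzc⟩ := exists_ne c
  closure_mono inter_subset_left <|
    mk_mem_closure_sinGraph_inter isPreconnected_univ (mem_univ c) (mem_univ _) hzc hs

theorem continuous_sinBlowupProj (c : X) : Continuous (sinBlowupProj c) :=
  continuous_fst.comp continuous_subtype_val

theorem eq_of_sinBlowupProj_eq {c : X} {w w' : sinBlowup c} (hc : sinBlowupProj c w ≠ c)
    (h : sinBlowupProj c w = sinBlowupProj c w') : w = w' := by
  have hc' : sinBlowupProj c w' ≠ c := h ▸ hc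
  refine Subtype.ext (Prod.ext h ?_)
  rw [snd_eq_sinOsc_of_mem w.2 hc, snd_eq_sinOsc_of_mem w'.2 hc']
  exact congrArg (sinOsc c) h

theorem isConnected_sinBlowupProj_fiber [PreconnectedSpace X] [Nontrivial X] (c x : X) :
    IsConnected (sinBlowupProj c ⁻¹' {x}) := by
  rcases eq_or_ne c x with rfl | hcx
  · let g : Icc (0 : ℝ) 2 → sinBlowup c := fun s => ⟨(c, s), mk_mem_sinBlowup c s.2⟩
    have : ConnectedSpace (Icc (0 : ℝ) 2) := Subtype.connectedSpace (isConnected_Icc zero_le_two)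
    convert isConnected_range (f := g) (by fun_prop)
    refine Subset.antisymm (fun w hw => ⟨⟨_, snd_mem_Icc_of_mem w.2⟩, Subtype.ext ?_⟩) ?_
    · exact Prod.ext hw.symm rfl
    · rintro _ ⟨s, rfl⟩
      rfl
  · convert isConnected_singleton (x := (⟨(x, sinOsc c x), subset_closure ⟨hcx.symm, rfl⟩⟩ :
      sinBlowup c))
    exact Set.ext fun w =>
      ⟨fun hw => eq_of_sinBlowupProj_eq (hw ▸ hcx.symm) hw, fun hw => hw ▸ rfl⟩

theorem sinBlowupProj_preimage_image {c x : X} (hxc : x ≠ c) {S : Set (sinBlowup c)}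
    (hS : IsClosed S) (hSc : IsPreconnected S) (hx : x ∈ sinBlowupProj c '' S) :
    sinBlowupProj c ⁻¹' (sinBlowupProj c '' S) = S := by
  refine Subset.antisymm (fun w hw => ?_) (subset_preimage_image _ _)
  by_cases hwc : sinBlowupProj c w = c
  · have hsub : sinGraph c ∩ Prod.fst ⁻¹' (sinBlowupProj c '' S) ⊆ (↑) '' S := by
      rintro v ⟨hv, u, huS, hu⟩
      have huc : sinBlowupProj c u ≠ c := by rw [hu]; exact hv.1
      refine ⟨u, huS, Prod.ext hu ?_⟩
      rw [snd_eq_sinOsc_of_mem u.2 huc, hv.2]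
      exact congrArg (sinOsc c) hu
    have hcS : c ∈ sinBlowupProj c '' S := have ⟨w₀, hw₀S, hw₀⟩ := hw; ⟨w₀, hw₀S, hw₀.trans hwc⟩
    have hcl := mk_mem_closure_sinGraph_inter
      (hSc.image _ (continuous_sinBlowupProj c).continuousOn) hcS hx hxc (snd_mem_Icc_of_mem w.2)
    obtain ⟨u, huS, hu⟩ :=
      ((isClosed_closure.isClosedMap_subtype_val S hS).closure_subset_iff.2 hsub) hcl
    exact (Subtype.ext (hu.trans (Prod.ext hwc.symm rfl)) : u = w) ▸ huS
  · obtain ⟨u, huS, hu⟩ := hw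
    rwa [← eq_of_sinBlowupProj_eq (hu ▸ hwc) hu]

theorem not_locallyConnectedSpace_sinBlowup [PreconnectedSpace X] [Nontrivial X] (c : X) :
    ¬ LocallyConnectedSpace (sinBlowup c) := by
  intro hlc
  let top : sinBlowup c := ⟨(c, 2), mk_mem_sinBlowup c ⟨zero_le_two, le_rfl⟩⟩
  obtain ⟨V, hV, hVc, hVU⟩ := locallyConnectedSpace_iff_connected_subsets.1 hlc top
    (Metric.ball top 1) (Metric.ball_mem_nhds _ one_pos)
  obtain ⟨δ, hδ, hδV⟩ := Metric.mem_nhds_iff.1 hV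
  obtain ⟨v, hvG, hvd⟩ := Metric.mem_closure_iff.1 top.2 δ hδ
  have hvV : (⟨v, subset_closure hvG⟩ : sinBlowup c) ∈ V := hδV <| by
    rwa [Metric.mem_ball, Subtype.dist_eq, dist_comm]
  -- `V` joins `top` to the graph point `v`, so it meets the graph at height `0`, outside the ball
  obtain ⟨t, ht0, htv, hts⟩ := Real.exists_pos_lt_sin_inv_eq (s := -1) ⟨le_rfl, by norm_num⟩
    (dist_pos.2 hvG.1)
  obtain ⟨u, huV, hut⟩ := hVc.intermediate_value (mem_of_mem_nhds hV) hvV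
    ((continuous_sinBlowupProj c).dist continuous_const).continuousOn
    ⟨by simpa [top, sinBlowupProj] using ht0.le, htv.le⟩
  have hut : dist (u : X × ℝ).1 c = t := hut
  have hu0 : (u : X × ℝ).2 = 0 := by
    rw [snd_eq_sinOsc_of_mem u.2 (fun h => ht0.ne (by rwa [h, dist_self] at hut)), sinOsc, hut,
      hts]
    norm_num
  have hu2 : dist (u : X × ℝ).2 2 < 1 :=
    (le_max_right _ _).trans_lt (Metric.mem_ball.1 (hVU huV))
  rw [hu0] at hu2
  norm_num at hu2

theorem isContinuumSp_sinBlowup [CompactSpace X] [ConnectedSpace X] [Nontrivial X] (c : X) :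
    IsContinuumSp (sinBlowup c) := by
  refine ⟨⟨⟨_, mk_mem_sinBlowup c ⟨le_rfl, zero_le_two⟩⟩⟩, inferInstance,
    connectedSpace_iff_univ.2 ?_⟩
  exact isClosed_univ.isConnected_preimage_of_isConnected_fibers (continuous_sinBlowupProj c)
    (isConnected_sinBlowupProj_fiber c) isConnected_univ

theorem exists_cp_homeomorph_sinBlowup [CompactSpace X] [ConnectedSpace X] {c p : X}
    (hpc : p ≠ c) : ∃ y : sinBlowup c, Nonempty (Cp X p ≃ₜ Cp (sinBlowup c) y) := by
  have : Nontrivial X := ⟨⟨p, c, hpc⟩⟩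
  let y : sinBlowup c := ⟨(p, sinOsc c p), subset_closure ⟨hpc, rfl⟩⟩
  refine ⟨y, ⟨(cpHomeomorphOfSaturated (continuous_sinBlowupProj c)
    (isConnected_sinBlowupProj_fiber c) y fun S hS hSc hyS => ?_).symm⟩⟩
  exact sinBlowupProj_preimage_image hpc hS hSc ⟨y, hyS, rfl⟩

end SinBlowup

theorem finiteGraph_not_unique_hyperspace_in_continua (X : Type u) [MetricSpace X]
    (hX : IsFiniteGraphSp X) (p : X) :
    ∃ (Y : Type u) (_ : MetricSpace Y) (y : Y), IsContinuumSp Y ∧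
      ¬ IsFiniteGraphSp Y ∧ Nonempty (Cp X p ≃ₜ Cp Y y) := by
  have : Nontrivial X := hX.nontrivial
  have : CompactSpace X := hX.1.2.1
  have : ConnectedSpace X := hX.1.2.2
  obtain ⟨c, hcp⟩ := exists_ne p
  obtain ⟨y, hy⟩ := exists_cp_homeomorph_sinBlowup hcp.symm
  exact ⟨sinBlowup c, inferInstance, y, isContinuumSp_sinBlowup c,
    fun hY => not_locallyConnectedSpace_sinBlowup c hY.locallyConnectedSpace, hy⟩
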